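/- Let E = E(I₀,{n_k},{c_k},{ξ_{k,l}}) be a homogeneous perfect set satisfying the gap-comparability condition with constant χ ≥ 1, and {H_m}_{m≥0} the sequence from Lemma 4.1's construction. For m ≥ 1 with m_{k−1} < m ≤ m_k define Λ(m) = max{|J|/|I| : I a branch of H_{m−1}, J a branch of H_m, J ⊂ I}, λ(m) the corresponding minimum, Γ(m) = α̅*_k / min_{I branch of H_{m−1}} |I|, and γ(m) = α̲*_k / max_{I branch of H_{m−1}} |I|. Then for every m ≥ 1: λ(m) ≤ Λ(m) ≤ 4χ²·λ(m), γ(m) ≤ Γ(m) ≤ 2χ²·γ(m), l(H_m) ≤ ∏_{i=1}^{m} M²·Λ(i), and l(H_m) ≤ ∏_{i=1}^{m} (1 − γ(i)). -/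

import Mathlib

open Set Filter Metric

noncomputable section

/-- A word `σ = σ₁⋯σ_k` is valid for the branching sequence `n` if `1 ≤ σ_j ≤ n j`
for every `1 ≤ j ≤ k`.  Words are represented as lists (read with 1-based indices). -/
def ValidWord (n : ℕ → ℕ) (σ : List ℕ) : Prop :=
  ∀ j, j < σ.length → 1 ≤ σ.getD j 0 ∧ σ.getD j 0 ≤ n (j + 1)

/-- The conditions (1)–(4) of Definition 2.1: the family of closed intervals
`I_σ = [a σ, b σ]` (for `σ ∈ D`) has homogeneous perfect structure with parameters
`n`, `c`, `ξ`. -/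
structure HPStruct (n : ℕ → ℕ) (c : ℕ → ℝ) (ξ : ℕ → ℕ → ℝ) (a b : List ℕ → ℝ) : Prop where
  /-- each `I_{σ*j}` is a subinterval of `I_σ` -/
  sub : ∀ σ : List ℕ, ValidWord n σ → ∀ j, 1 ≤ j → j ≤ n (σ.length + 1) →
    Set.Icc (a (σ ++ [j])) (b (σ ++ [j])) ⊆ Set.Icc (a σ) (b σ)
  /-- `min I_{σ*(l+1)} ≥ max I_{σ*l}` -/
  ord : ∀ σ : List ℕ, ValidWord n σ → ∀ l, 1 ≤ l → l + 1 ≤ n (σ.length + 1) →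
    b (σ ++ [l]) ≤ a (σ ++ [l + 1])
  /-- `|I_{σ*j}| / |I_σ| = c_k` -/
  ratio : ∀ σ : List ℕ, ValidWord n σ → ∀ j, 1 ≤ j → j ≤ n (σ.length + 1) →
    b (σ ++ [j]) - a (σ ++ [j]) = c (σ.length + 1) * (b σ - a σ)
  /-- `min I_{σ*1} - min I_σ = ξ_{k,0}` -/
  gap0 : ∀ σ : List ℕ, ValidWord n σ → a (σ ++ [1]) - a σ = ξ (σ.length + 1) 0
  /-- `min I_{σ*(l+1)} - max I_{σ*l} = ξ_{k,l}` -/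
  gapl : ∀ σ : List ℕ, ValidWord n σ → ∀ l, 1 ≤ l → l + 1 ≤ n (σ.length + 1) →
    a (σ ++ [l + 1]) - b (σ ++ [l]) = ξ (σ.length + 1) l
  /-- `max I_σ - max I_{σ*n_k} = ξ_{k,n_k}` -/
  gapn : ∀ σ : List ℕ, ValidWord n σ → b σ - b (σ ++ [n (σ.length + 1)]) =
    ξ (σ.length + 1) (n (σ.length + 1))

/-- A homogeneous perfect set datum `E(I₀, {n_k}, {c_k}, {ξ_{k,l}})` of Definition 2.1:
a nondegenerate initial closed interval `I₀ = [a ∅, b ∅]`, integers `n_k ≥ 2`,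
ratios `c_k > 0` with `n_k c_k < 1`, nonnegative gaps `ξ_{k,l}` (`0 ≤ l ≤ n_k`), and a
family of closed intervals `I_σ = [a σ, b σ]` with homogeneous perfect structure. -/
structure HPS where
  n : ℕ → ℕ
  c : ℕ → ℝ
  ξ : ℕ → ℕ → ℝ
  a : List ℕ → ℝ
  b : List ℕ → ℝ
  hn : ∀ k, 1 ≤ k → 2 ≤ n k
  hc : ∀ k, 1 ≤ k → 0 < c k
  hnc : ∀ k, 1 ≤ k → (n k : ℝ) * c k < 1
  hξ : ∀ k, 1 ≤ k → ∀ l, l ≤ n k → 0 ≤ ξ k l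
  hab : a [] < b []
  struct : HPStruct n c ξ a b

namespace HPS

variable (S : HPS)

/-- `E_k`, the union of the `k`-order basic intervals. -/
def Ek (k : ℕ) : Set ℝ :=
  ⋃ σ ∈ {σ : List ℕ | σ.length = k ∧ ValidWord S.n σ}, Set.Icc (S.a σ) (S.b σ)

/-- The homogeneous perfect set `E = ⋂_k E_k`. -/
def E : Set ℝ := ⋂ k, S.Ek k

/-- Left endpoint of the trimmed interval `I_σ*` (for `σ ∈ D_k`):
`min I_σ* - min I_σ = ξ_{k+1,0}`. -/
def aStar (σ : List ℕ) : ℝ := S.a σ + S.ξ (σ.length + 1) 0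

/-- Right endpoint of the trimmed interval `I_σ*`:
`max I_σ - max I_σ* = ξ_{k+1,n_{k+1}}`. -/
def bStar (σ : List ℕ) : ℝ := S.b σ - S.ξ (σ.length + 1) (S.n (σ.length + 1))

/-- `E_k* = ⋃_{σ ∈ D_k} I_σ*`. -/
def EkStar (k : ℕ) : Set ℝ :=
  ⋃ σ ∈ {σ : List ℕ | σ.length = k ∧ ValidWord S.n σ}, Set.Icc (S.aStar σ) (S.bStar σ)

/-- `δ_k = |I_σ*|` for `σ ∈ D_k` (this common value is computed on the word `1⋯1`). -/
def delta (k : ℕ) : ℝ :=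
  S.bStar (List.replicate k 1) - S.aStar (List.replicate k 1)

/-- `c_k* = δ_k / δ_{k-1}`. -/
def cStar (k : ℕ) : ℝ := S.delta k / S.delta (k - 1)

/-- `δ_k* = δ₀ c₁* ⋯ c_k*`. -/
def deltaStar (k : ℕ) : ℝ := S.delta 0 * ∏ j ∈ Finset.Icc 1 k, S.cStar j

/-- `N_k* = n₁* ⋯ n_k* = n₁ ⋯ n_k`. -/
def Nstar (k : ℕ) : ℕ := ∏ j ∈ Finset.Icc 1 k, S.n j

/-- The reconstructed gap parameters: `ξ*_{k,l} = ξ_{k,l} + ξ_{k+1,0} + ξ_{k+1,n_{k+1}}`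
for `1 ≤ l ≤ n_k - 1`, `ξ*_{k,0} = ξ_{k+1,0}`, `ξ*_{k,n_k} = ξ_{k+1,n_{k+1}}`. -/
def xiStar (k l : ℕ) : ℝ :=
  if l = 0 then S.ξ (k + 1) 0
  else if l = S.n k then S.ξ (k + 1) (S.n (k + 1))
  else S.ξ k l + S.ξ (k + 1) 0 + S.ξ (k + 1) (S.n (k + 1))

/-- `α̲*_k = min_{1 ≤ l ≤ n_k - 1} ξ*_{k,l}`. -/
def alphaLo (k : ℕ) : ℝ := sInf ((fun l => S.xiStar k l) '' Set.Icc 1 (S.n k - 1))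

/-- `α̅*_k = max_{1 ≤ l ≤ n_k - 1} ξ*_{k,l}`. -/
def alphaHi (k : ℕ) : ℝ := sSup ((fun l => S.xiStar k l) '' Set.Icc 1 (S.n k - 1))

end HPS

/-- The gap-comparability condition: `max_{1≤l≤n_k-1} ξ_{k,l} ≤ χ · min_{1≤l≤n_k-1} ξ_{k,l}`
for every `k ≥ 1`. -/
def GapComparable (S : HPS) (χ : ℝ) : Prop :=
  ∀ k, 1 ≤ k → ∀ l l', 1 ≤ l → l ≤ S.n k - 1 → 1 ≤ l' → l' ≤ S.n k - 1 →
    S.ξ k l ≤ χ * S.ξ k l'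

/-- `M = ⌊2χ⌋ + 1`. -/
def Mconst (χ : ℝ) : ℕ := ⌊2 * χ⌋₊ + 1

/-- `i_k`: equal to `1` if `n_k < M`, and otherwise the integer with `M^{i_k} ≤ n_k < M^{i_k+1}`. -/
def HPS.ik (S : HPS) (χ : ℝ) (k : ℕ) : ℕ := max 1 (Nat.log (Mconst χ) (S.n k))

/-- `m_k = i₁ + ⋯ + i_k` (with `m₀ = 0`). -/
def HPS.mIdx (S : HPS) (χ : ℝ) (k : ℕ) : ℕ := ∑ l ∈ Finset.Icc 1 k, S.ik χ l

/-- For `m ≥ 1`, the index `k` with `m_{k-1} < m ≤ m_k`. -/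
def HPS.kOf (S : HPS) (χ : ℝ) (m : ℕ) : ℕ := sInf {k | m ≤ S.mIdx χ k}

/-- The data of the sequence `{H_m}` constructed in Lemma 4.1, with its characterizing
properties.  `Br m` is the finite set of branches of `H_m`, a branch being recorded by its
endpoints, and `H_m = ⋃_{p ∈ Br m} [p.1, p.2]`. -/
structure BranchSeq (S : HPS) (χ : ℝ) where
  Br : ℕ → Finset (ℝ × ℝ)
  /-- each `H_m` has at least one branch -/
  nonempty : ∀ m, (Br m).Nonempty
  /-- branches are nondegenerate closed intervals -/
  lt : ∀ m, ∀ p ∈ Br m, p.1 < p.2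
  /-- distinct branches of `H_m` have disjoint interiors -/
  disj : ∀ m, ∀ p ∈ Br m, ∀ q ∈ Br m, p ≠ q →
    Set.Ioo p.1 p.2 ∩ Set.Ioo q.1 q.2 = ∅
  /-- the sequence `H_m` is decreasing under inclusion -/
  dec : ∀ m, (⋃ p ∈ Br (m + 1), Set.Icc p.1 p.2) ⊆ ⋃ p ∈ Br m, Set.Icc p.1 p.2
  /-- every branch of `H_{m+1}` is contained in a branch of `H_m` -/
  nested : ∀ m, ∀ q ∈ Br (m + 1), ∃ p ∈ Br m, Set.Icc q.1 q.2 ⊆ Set.Icc p.1 p.2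
  /-- `E = ⋂_m H_m` -/
  interE : S.E = ⋂ m, ⋃ p ∈ Br m, Set.Icc p.1 p.2
  /-- `H_{m_k} = E_k*`, the branches being exactly the intervals `I_σ*`, `σ ∈ D_k` -/
  levels : ∀ k, (Br (S.mIdx χ k) : Set (ℝ × ℝ)) =
    {p : ℝ × ℝ | ∃ σ : List ℕ, σ.length = k ∧ ValidWord S.n σ ∧
      p = (S.aStar σ, S.bStar σ)}
  /-- each branch of `H_m` contains at most `M²` branches of `H_{m+1}` -/
  card_le : ∀ m, ∀ p ∈ Br m,
    {q ∈ (Br (m + 1) : Set (ℝ × ℝ)) | Set.Icc q.1 q.2 ⊆ Set.Icc p.1 p.2}.ncard ≤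
      (Mconst χ) ^ 2
  /-- for `m_{k-1} < m < m_k`, each branch of `H_{m-1}` contains exactly `M` branches of `H_m` -/
  exactM : ∀ k, 1 ≤ k → ∀ m, S.mIdx χ (k - 1) < m → m < S.mIdx χ k →
    ∀ p ∈ Br (m - 1),
      {q ∈ (Br m : Set (ℝ × ℝ)) | Set.Icc q.1 q.2 ⊆ Set.Icc p.1 p.2}.ncard = Mconst χ
  /-- for `m_{k-1} < m < m_k`, each branch of `H_m` is the convex hull of a block of
  consecutive intervals `I_σ*`, `σ ∈ D_k`: its endpoints are endpoints of such intervals -/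
  hull : ∀ k, 1 ≤ k → ∀ m, S.mIdx χ (k - 1) < m → m < S.mIdx χ k →
    ∀ p ∈ Br m, ∃ σ τ : List ℕ, σ.length = k ∧ τ.length = k ∧
      ValidWord S.n σ ∧ ValidWord S.n τ ∧ p.1 = S.aStar σ ∧ p.2 = S.bStar τ
  /-- `max_{I ∈ H_m} |I| ≤ 2χ · min_{I ∈ H_m} |I|` -/
  comparable : ∀ m, ∀ p ∈ Br m, ∀ q ∈ Br m, p.2 - p.1 ≤ 2 * χ * (q.2 - q.1)

namespace BranchSeq

variable {S : HPS} {χ : ℝ} (B : BranchSeq S χ)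

/-- `l(H_m)`, the total length of the branches of `H_m`. -/
def len (m : ℕ) : ℝ := ∑ p ∈ B.Br m, (p.2 - p.1)

/-- `max_{I branch of H_m} |I|`. -/
def maxLen (m : ℕ) : ℝ :=
  sSup ((fun p : ℝ × ℝ => p.2 - p.1) '' (B.Br m : Set (ℝ × ℝ)))

/-- `min_{I branch of H_m} |I|`. -/
def minLen (m : ℕ) : ℝ :=
  sInf ((fun p : ℝ × ℝ => p.2 - p.1) '' (B.Br m : Set (ℝ × ℝ)))

/-- `Λ(m) = max {|J|/|I| : I branch of H_{m-1}, J branch of H_m, J ⊆ I}`. -/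
def Lam (m : ℕ) : ℝ :=
  sSup {r : ℝ | ∃ p ∈ B.Br (m - 1), ∃ q ∈ B.Br m,
    Set.Icc q.1 q.2 ⊆ Set.Icc p.1 p.2 ∧ r = (q.2 - q.1) / (p.2 - p.1)}

/-- `λ(m) = min {|J|/|I| : I branch of H_{m-1}, J branch of H_m, J ⊆ I}`. -/
def lamSmall (m : ℕ) : ℝ :=
  sInf {r : ℝ | ∃ p ∈ B.Br (m - 1), ∃ q ∈ B.Br m,
    Set.Icc q.1 q.2 ⊆ Set.Icc p.1 p.2 ∧ r = (q.2 - q.1) / (p.2 - p.1)}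

/-- `γ(m) = α̲*_k / max_{I branch of H_{m-1}} |I|`, where `m_{k-1} < m ≤ m_k`. -/
def gam (m : ℕ) : ℝ := S.alphaLo (S.kOf χ m) / B.maxLen (m - 1)

/-- `Γ(m) = α̅*_k / min_{I branch of H_{m-1}} |I|`, where `m_{k-1} < m ≤ m_k`. -/
def Gam (m : ℕ) : ℝ := S.alphaHi (S.kOf χ m) / B.minLen (m - 1)

open Classical in
/-- `S_ε(m) = {j : 1 ≤ j ≤ m, γ(j) ≤ ε}`. -/
def Sfin (ε : ℝ) (m : ℕ) : Finset ℕ := (Finset.Icc 1 m).filter (fun j => B.gam j ≤ ε)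

open Classical in
/-- The branches of `H_{m+1}` contained in the branch `p` of `H_m`. -/
def children (m : ℕ) (p : ℝ × ℝ) : Finset (ℝ × ℝ) :=
  (B.Br (m + 1)).filter (fun q => p.1 ≤ q.1 ∧ q.2 ≤ p.2)

end BranchSeq

section Aux
theorem validWord_nil (n : ℕ → ℕ) : ValidWord n [] := by
  intro j hj; simp at hj

theorem validWord_append_iff (n : ℕ → ℕ) (σ : List ℕ) (j : ℕ) :
    ValidWord n (σ ++ [j]) ↔ ValidWord n σ ∧ 1 ≤ j ∧ j ≤ n (σ.length + 1) := by
  constructor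
  · intro h
    refine ⟨fun i hi => ?_, ?_⟩
    · have := h i (by simp; omega)
      rwa [List.getD_append _ _ _ _ hi] at this
    · have := h σ.length (by simp)
      have e : (σ ++ [j]).getD σ.length 0 = j := by
        rw [List.getD_eq_getElem?_getD]
        simp
      rwa [e] at this
  · rintro ⟨h1, h2, h3⟩ i hi
    simp at hi
    rcases Nat.lt_or_ge i σ.length with h | h
    · rw [List.getD_append _ _ _ _ h]; exact h1 i h
    · have : i = σ.length := by omega
      subst this
      have e : (σ ++ [j]).getD σ.length 0 = j := by
        rw [List.getD_eq_getElem?_getD]; simp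
      rw [e]; exact ⟨h2, h3⟩

theorem validWord_dropLast (n : ℕ → ℕ) (σ : List ℕ) (h : ValidWord n σ) :
    ValidWord n σ.dropLast := by
  rcases List.eq_nil_or_concat σ with rfl | ⟨τ, j, rfl⟩
  · simpa using h
  · simp only [List.concat_eq_append] at h ⊢
    rw [List.dropLast_concat]
    exact ((validWord_append_iff n τ j).1 h).1

namespace HPS
variable (S : HPS)

/-- H1: basic intervals are nondegenerate. -/
theorem len_pos (σ : List ℕ) (h : ValidWord S.n σ) : 0 < S.b σ - S.a σ := by
  induction σ using List.reverseRecOn with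
  | nil => linarith [S.hab]
  | append_singleton τ j ih =>
    rw [validWord_append_iff] at h
    obtain ⟨hτ, hj1, hj2⟩ := h
    rw [S.struct.ratio τ hτ j hj1 hj2]
    exact mul_pos (S.hc _ (by omega)) (ih hτ)

theorem a_lt_b (σ : List ℕ) (h : ValidWord S.n σ) : S.a σ < S.b σ := by
  linarith [S.len_pos σ h]

/-- H2 -/
theorem endpoint_mono (σ : List ℕ) (h : ValidWord S.n σ) (j : ℕ) (hj1 : 1 ≤ j)
    (hj2 : j ≤ S.n (σ.length + 1)) :
    S.a σ ≤ S.a (σ ++ [j]) ∧ S.b (σ ++ [j]) ≤ S.b σ := by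
  have hsub := S.struct.sub σ h j hj1 hj2
  have hne : S.a (σ ++ [j]) ≤ S.b (σ ++ [j]) :=
    le_of_lt (S.a_lt_b _ ((validWord_append_iff _ _ _).2 ⟨h, hj1, hj2⟩))
  rw [Set.Icc_subset_Icc_iff hne] at hsub
  exact hsub

/-- H3 chain: `b (σ*l) ≤ a (σ*l')` for `l < l'`. -/
theorem chainB (σ : List ℕ) (h : ValidWord S.n σ) (l l' : ℕ) (hl : 1 ≤ l)
    (hll : l < l') (hl' : l' ≤ S.n (σ.length + 1)) :
    S.b (σ ++ [l]) ≤ S.a (σ ++ [l']) := by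
  induction l' with
  | zero => omega
  | succ m ih =>
    rcases Nat.lt_or_ge l m with hlm | hlm
    · have h1 : S.b (σ ++ [l]) ≤ S.a (σ ++ [m]) := ih hlm (by omega)
      have h2 : S.a (σ ++ [m]) ≤ S.b (σ ++ [m]) :=
        le_of_lt (S.a_lt_b _ ((validWord_append_iff _ _ _).2 ⟨h, by omega, by omega⟩))
      have h3 := S.struct.gapl σ h m (by omega) hl'
      have h4 : 0 ≤ S.ξ (σ.length + 1) m := S.hξ _ (by omega) m (by omega)
      linarith
    · have : l = m := by omega
      subst this
      have h3 := S.struct.gapl σ h l hl hl'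
      have h4 : 0 ≤ S.ξ (σ.length + 1) l := S.hξ _ (by omega) l (by omega)
      linarith

/-- H3': gap with ξ. -/
theorem chainB_xi (σ : List ℕ) (h : ValidWord S.n σ) (l l' : ℕ) (hl : 1 ≤ l)
    (hll : l < l') (hl' : l' ≤ S.n (σ.length + 1)) :
    S.b (σ ++ [l]) + S.ξ (σ.length + 1) l ≤ S.a (σ ++ [l']) := by
  have h3 := S.struct.gapl σ h l hl (by omega)
  rcases Nat.lt_or_ge (l + 1) l' with hlt | hge
  · have h1 : S.b (σ ++ [l + 1]) ≤ S.a (σ ++ [l']) := S.chainB σ h (l+1) l' (by omega) hlt hl'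
    have h2 : S.a (σ ++ [l + 1]) ≤ S.b (σ ++ [l + 1]) :=
      le_of_lt (S.a_lt_b _ ((validWord_append_iff _ _ _).2 ⟨h, by omega, by omega⟩))
    linarith
  · have : l' = l + 1 := by omega
    subst this; linarith

/-- H4: distinct valid words of the same length are ordered. -/
theorem ordered (k : ℕ) : ∀ σ τ : List ℕ, σ.length = k → τ.length = k →
    ValidWord S.n σ → ValidWord S.n τ → σ ≠ τ →
    S.b σ ≤ S.a τ ∨ S.b τ ≤ S.a σ := by
  induction k with
  | zero =>
    intro σ τ hσ hτ _ _ hne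
    rw [List.length_eq_zero_iff] at hσ hτ; subst hσ; subst hτ; exact absurd rfl hne
  | succ k ih =>
    intro σ τ hσ hτ hvσ hvτ hne
    obtain ⟨σ₀, i, rfl⟩ : ∃ σ₀ i, σ = σ₀ ++ [i] := by
      rcases List.eq_nil_or_concat σ with rfl | ⟨σ₀, i, rfl⟩
      · simp at hσ
      · exact ⟨σ₀, i, by simp⟩
    obtain ⟨τ₀, j, rfl⟩ : ∃ τ₀ j, τ = τ₀ ++ [j] := by
      rcases List.eq_nil_or_concat τ with rfl | ⟨τ₀, j, rfl⟩
      · simp at hτ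
      · exact ⟨τ₀, j, by simp⟩
    simp only [List.length_append, List.length_singleton] at hσ hτ
    rw [validWord_append_iff] at hvσ hvτ
    obtain ⟨hv0, hi1, hi2⟩ := hvσ
    obtain ⟨hv0', hj1, hj2⟩ := hvτ
    rcases eq_or_ne σ₀ τ₀ with rfl | hne0
    · have hij : i ≠ j := fun hij => hne (by rw [hij])
      rcases Nat.lt_or_ge i j with hlt | hge
      · exact Or.inl (S.chainB σ₀ hv0 i j hi1 hlt hj2)
      · exact Or.inr (S.chainB σ₀ hv0 j i hj1 (by omega) hi2)
    · have hlen : σ₀.length = k := by omega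
      have hlen' : τ₀.length = k := by omega
      rcases ih σ₀ τ₀ hlen hlen' hv0 hv0' hne0 with h | h
      · left
        calc S.b (σ₀ ++ [i]) ≤ S.b σ₀ := (S.endpoint_mono σ₀ hv0 i hi1 hi2).2
          _ ≤ S.a τ₀ := h
          _ ≤ S.a (τ₀ ++ [j]) := (S.endpoint_mono τ₀ hv0' j hj1 hj2).1
      · right
        calc S.b (τ₀ ++ [j]) ≤ S.b τ₀ := (S.endpoint_mono τ₀ hv0' j hj1 hj2).2
          _ ≤ S.a σ₀ := h
          _ ≤ S.a (σ₀ ++ [i]) := (S.endpoint_mono σ₀ hv0 i hi1 hi2).1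

/-- H5 -/
theorem aStar_eq (σ : List ℕ) (h : ValidWord S.n σ) : S.aStar σ = S.a (σ ++ [1]) := by
  have := S.struct.gap0 σ h
  simp only [aStar]; linarith

theorem bStar_eq (σ : List ℕ) (h : ValidWord S.n σ) :
    S.bStar σ = S.b (σ ++ [S.n (σ.length + 1)]) := by
  have := S.struct.gapn σ h
  simp only [bStar]; linarith

theorem a_le_aStar (σ : List ℕ) : S.a σ ≤ S.aStar σ := by
  have : 0 ≤ S.ξ (σ.length + 1) 0 := S.hξ _ (by omega) 0 (by omega)
  simp only [aStar]; linarith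

theorem bStar_le_b (σ : List ℕ) : S.bStar σ ≤ S.b σ := by
  have : 0 ≤ S.ξ (σ.length + 1) (S.n (σ.length + 1)) := S.hξ _ (by omega) _ le_rfl
  simp only [bStar]; linarith

/-- H6 -/
theorem aStar_lt_bStar (σ : List ℕ) (h : ValidWord S.n σ) : S.aStar σ < S.bStar σ := by
  rw [S.aStar_eq σ h, S.bStar_eq σ h]
  have hn2 : 2 ≤ S.n (σ.length + 1) := S.hn _ (by omega)
  have h1 : S.a (σ ++ [1]) < S.b (σ ++ [1]) :=
    S.a_lt_b _ ((validWord_append_iff _ _ _).2 ⟨h, le_rfl, by omega⟩)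
  have h2 : S.b (σ ++ [1]) ≤ S.a (σ ++ [S.n (σ.length + 1)]) :=
    S.chainB σ h 1 _ le_rfl (by omega) le_rfl
  have h3 : S.a (σ ++ [S.n (σ.length + 1)]) < S.b (σ ++ [S.n (σ.length + 1)]) :=
    S.a_lt_b _ ((validWord_append_iff _ _ _).2 ⟨h, by omega, le_rfl⟩)
  linarith


theorem dropLast_endpoints (τ : List ℕ) (h : ValidWord S.n τ) (hne : τ ≠ []) :
    S.a τ.dropLast ≤ S.a τ ∧ S.b τ ≤ S.b τ.dropLast := by
  obtain ⟨τ₀, j, rfl⟩ : ∃ τ₀ j, τ = τ₀ ++ [j] := by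
    rcases List.eq_nil_or_concat τ with rfl | ⟨τ₀, j, rfl⟩
    · exact absurd rfl hne
    · exact ⟨τ₀, j, by simp⟩
  rw [validWord_append_iff] at h
  obtain ⟨h0, hj1, hj2⟩ := h
  rw [List.dropLast_concat]
  exact ⟨(S.endpoint_mono τ₀ h0 j hj1 hj2).1, (S.endpoint_mono τ₀ h0 j hj1 hj2).2⟩

/-- SP1: same parent via right endpoint. -/
theorem sameParent_right (ρ τ : List ℕ) (hlen : τ.length = ρ.length + 1)
    (hρ : ValidWord S.n ρ) (hτ : ValidWord S.n τ)
    (h1 : S.aStar ρ < S.bStar τ) (h2 : S.bStar τ ≤ S.bStar ρ) :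
    τ.dropLast = ρ := by
  by_contra hne
  have hτne : τ ≠ [] := by intro h; rw [h] at hlen; simp at hlen
  have hv1 : ValidWord S.n τ.dropLast := validWord_dropLast _ _ hτ
  have hlen1 : τ.dropLast.length = ρ.length := by
    rw [List.length_dropLast, hlen]; omega
  have hep := S.dropLast_endpoints τ hτ hτne
  have haa : S.a ρ ≤ S.aStar ρ := S.a_le_aStar ρ
  have hbb : S.bStar ρ ≤ S.b ρ := S.bStar_le_b ρ
  have hbbτ : S.bStar τ ≤ S.b τ := S.bStar_le_b τ
  have habτ : S.aStar τ < S.bStar τ := S.aStar_lt_bStar τ hτ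
  have haτ : S.a τ ≤ S.aStar τ := S.a_le_aStar τ
  rcases S.ordered ρ.length τ.dropLast ρ hlen1 rfl hv1 hρ hne with h | h
  · linarith [hep.2]
  · linarith [hep.1]

/-- SP2: same parent via left endpoint. -/
theorem sameParent_left (ρ σ : List ℕ) (hlen : σ.length = ρ.length + 1)
    (hρ : ValidWord S.n ρ) (hσ : ValidWord S.n σ)
    (h1 : S.aStar ρ ≤ S.aStar σ) (h2 : S.aStar σ < S.bStar ρ) :
    σ.dropLast = ρ := by
  by_contra hne
  have hσne : σ ≠ [] := by intro h; rw [h] at hlen; simp at hlen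
  have hv1 : ValidWord S.n σ.dropLast := validWord_dropLast _ _ hσ
  have hlen1 : σ.dropLast.length = ρ.length := by
    rw [List.length_dropLast, hlen]; omega
  have hep := S.dropLast_endpoints σ hσ hσne
  have haa : S.a ρ ≤ S.aStar ρ := S.a_le_aStar ρ
  have hbb : S.bStar ρ ≤ S.b ρ := S.bStar_le_b ρ
  have hbbσ : S.bStar σ ≤ S.b σ := S.bStar_le_b σ
  have habσ : S.aStar σ < S.bStar σ := S.aStar_lt_bStar σ hσ
  have haσ : S.a σ ≤ S.aStar σ := S.a_le_aStar σ
  rcases S.ordered ρ.length σ.dropLast ρ hlen1 rfl hv1 hρ hne with h | h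
  · linarith [hep.2]
  · linarith [hep.1]

theorem alphaLo_le (k l : ℕ) (hl : 1 ≤ l) (hl' : l ≤ S.n k - 1) :
    S.alphaLo k ≤ S.xiStar k l := by
  have hfin : ((fun l => S.xiStar k l) '' Set.Icc 1 (S.n k - 1)).Finite :=
    (Set.finite_Icc _ _).image _
  exact csInf_le hfin.bddBelow ⟨l, ⟨hl, hl'⟩, rfl⟩

theorem xiStar_eq (k l : ℕ) (hk : 1 ≤ k) (hl : 1 ≤ l) (hl' : l ≤ S.n k - 1) :
    S.xiStar k l = S.ξ k l + S.ξ (k + 1) 0 + S.ξ (k + 1) (S.n (k + 1)) := by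
  have h2 : 2 ≤ S.n k := S.hn k hk
  rw [xiStar, if_neg (by omega), if_neg (by omega)]

theorem xiStar_nonneg (k l : ℕ) (hk : 1 ≤ k) (hl : 1 ≤ l) (hl' : l ≤ S.n k - 1) :
    0 ≤ S.xiStar k l := by
  rw [S.xiStar_eq k l hk hl hl']
  have h2 : 2 ≤ S.n k := S.hn k hk
  have := S.hξ k hk l (by omega)
  have := S.hξ (k+1) (by omega) 0 (by omega)
  have := S.hξ (k+1) (by omega) (S.n (k+1)) le_rfl
  linarith

theorem alphaLo_nonneg (k : ℕ) (hk : 1 ≤ k) : 0 ≤ S.alphaLo k := by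
  have h2 : 2 ≤ S.n k := S.hn k hk
  refine le_csInf ⟨S.xiStar k 1, 1, ⟨le_rfl, by omega⟩, rfl⟩ ?_
  rintro x ⟨l, ⟨hl1, hl2⟩, rfl⟩
  exact S.xiStar_nonneg k l hk hl1 hl2

/-- KeyGap -/
theorem key_gap (σ τ : List ℕ) (hσ : ValidWord S.n σ) (hτ : ValidWord S.n τ)
    (hlen : σ.length = τ.length) (hk : 1 ≤ τ.length)
    (hpar : σ.dropLast = τ.dropLast)
    (hord : S.bStar τ ≤ S.aStar σ) :
    S.alphaLo τ.length + S.bStar τ ≤ S.aStar σ := by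
  have hτne : τ ≠ [] := by intro h; rw [h] at hk; simp at hk
  have hσne : σ ≠ [] := by intro h; rw [h, List.length_nil] at hlen; omega
  obtain ⟨σ₀, i, rfl⟩ : ∃ σ₀ i, σ = σ₀ ++ [i] := by
    rcases List.eq_nil_or_concat σ with rfl | ⟨σ₀, i, rfl⟩
    · exact absurd rfl hσne
    · exact ⟨σ₀, i, by simp⟩
  obtain ⟨τ₀, j, rfl⟩ : ∃ τ₀ j, τ = τ₀ ++ [j] := by
    rcases List.eq_nil_or_concat τ with rfl | ⟨τ₀, j, rfl⟩
    · exact absurd rfl hτne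
    · exact ⟨τ₀, j, by simp⟩
  rw [List.dropLast_concat, List.dropLast_concat] at hpar
  subst hpar
  rw [validWord_append_iff] at hσ hτ
  obtain ⟨hv0, hi1, hi2⟩ := hσ
  obtain ⟨_, hj1, hj2⟩ := hτ
  set k := σ₀.length + 1 with hkdef
  have hklen : (σ₀ ++ [j]).length = k := by simp [hkdef]
  rw [hklen]
  -- j < i
  have habσ : S.aStar (σ₀ ++ [i]) < S.bStar (σ₀ ++ [i]) :=
    S.aStar_lt_bStar _ ((validWord_append_iff _ _ _).2 ⟨hv0, hi1, hi2⟩)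
  have habτ : S.aStar (σ₀ ++ [j]) < S.bStar (σ₀ ++ [j]) :=
    S.aStar_lt_bStar _ ((validWord_append_iff _ _ _).2 ⟨hv0, hj1, hj2⟩)
  have haτ : S.a (σ₀ ++ [j]) ≤ S.aStar (σ₀ ++ [j]) := S.a_le_aStar _
  have hbτ : S.bStar (σ₀ ++ [j]) ≤ S.b (σ₀ ++ [j]) := S.bStar_le_b _
  have haσ : S.a (σ₀ ++ [i]) ≤ S.aStar (σ₀ ++ [i]) := S.a_le_aStar _
  have hbσ : S.bStar (σ₀ ++ [i]) ≤ S.b (σ₀ ++ [i]) := S.bStar_le_b _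
  have hji : j < i := by
    rcases Nat.lt_or_ge j i with h | h
    · exact h
    · exfalso
      rcases Nat.eq_or_lt_of_le h with rfl | h
      · linarith
      · have := S.chainB σ₀ hv0 i j hi1 h hj2
        linarith
  -- gap estimate
  have hgap := S.chainB_xi σ₀ hv0 j i hj1 hji hi2
  have hlo : S.alphaLo k ≤ S.xiStar k j := S.alphaLo_le k j hj1 (by omega)
  rw [S.xiStar_eq k j (by omega) hj1 (by omega)] at hlo
  have ha' : S.aStar (σ₀ ++ [i]) = S.a (σ₀ ++ [i]) + S.ξ (k + 1) 0 := by
    simp only [HPS.aStar]; rw [show (σ₀ ++ [i]).length = k by simp [hkdef]]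
  have hb' : S.bStar (σ₀ ++ [j]) =
      S.b (σ₀ ++ [j]) - S.ξ (k + 1) (S.n (k + 1)) := by
    simp only [HPS.bStar]; rw [show (σ₀ ++ [j]).length = k by simp [hkdef]]
  rw [ha', hb']
  rw [show (σ₀.length + 1) = k from rfl] at hgap
  linarith


theorem alphaLo_mem (k : ℕ) (hk : 1 ≤ k) :
    ∃ l, 1 ≤ l ∧ l ≤ S.n k - 1 ∧ S.alphaLo k = S.xiStar k l := by
  have h2 : 2 ≤ S.n k := S.hn k hk
  have hne : ((fun l => S.xiStar k l) '' Set.Icc 1 (S.n k - 1)).Nonempty :=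
    ⟨S.xiStar k 1, 1, ⟨le_rfl, by omega⟩, rfl⟩
  have hfin : ((fun l => S.xiStar k l) '' Set.Icc 1 (S.n k - 1)).Finite :=
    (Set.finite_Icc _ _).image _
  obtain ⟨l, ⟨hl1, hl2⟩, he⟩ := hne.csInf_mem hfin
  exact ⟨l, hl1, hl2, he.symm⟩

theorem alphaHi_mem (k : ℕ) (hk : 1 ≤ k) :
    ∃ l, 1 ≤ l ∧ l ≤ S.n k - 1 ∧ S.alphaHi k = S.xiStar k l := by
  have h2 : 2 ≤ S.n k := S.hn k hk
  have hne : ((fun l => S.xiStar k l) '' Set.Icc 1 (S.n k - 1)).Nonempty :=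
    ⟨S.xiStar k 1, 1, ⟨le_rfl, by omega⟩, rfl⟩
  have hfin : ((fun l => S.xiStar k l) '' Set.Icc 1 (S.n k - 1)).Finite :=
    (Set.finite_Icc _ _).image _
  obtain ⟨l, ⟨hl1, hl2⟩, he⟩ := hne.csSup_mem hfin
  exact ⟨l, hl1, hl2, he.symm⟩

theorem alphaLo_le_alphaHi (k : ℕ) (hk : 1 ≤ k) : S.alphaLo k ≤ S.alphaHi k := by
  obtain ⟨l, hl1, hl2, he⟩ := S.alphaHi_mem k hk
  rw [he]; exact S.alphaLo_le k l hl1 hl2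

theorem alphaHi_le_chi (k : ℕ) (hk : 1 ≤ k) (χ : ℝ) (hχ : 1 ≤ χ)
    (hgap : GapComparable S χ) : S.alphaHi k ≤ χ * S.alphaLo k := by
  obtain ⟨l, hl1, hl2, he⟩ := S.alphaHi_mem k hk
  obtain ⟨l', hl1', hl2', he'⟩ := S.alphaLo_mem k hk
  rw [he, he', S.xiStar_eq k l hk hl1 hl2, S.xiStar_eq k l' hk hl1' hl2']
  have h1 := hgap k hk l l' hl1 hl2 hl1' hl2'
  have h2 : 2 ≤ S.n k := S.hn k hk
  have h3 := S.hξ (k+1) (by omega) 0 (by omega)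
  have h4 := S.hξ (k+1) (by omega) (S.n (k+1)) le_rfl
  nlinarith

theorem mIdx_zero (χ : ℝ) : S.mIdx χ 0 = 0 := by simp [HPS.mIdx]

theorem one_le_ik (χ : ℝ) (k : ℕ) : 1 ≤ S.ik χ k := le_max_left _ _

theorem mIdx_succ (χ : ℝ) (k : ℕ) : S.mIdx χ (k + 1) = S.mIdx χ k + S.ik χ (k + 1) := by
  simp only [HPS.mIdx]
  rw [← Finset.sum_Icc_succ_top (by omega : 1 ≤ k + 1)]

theorem self_le_mIdx (χ : ℝ) (m : ℕ) : m ≤ S.mIdx χ m := by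
  induction m with
  | zero => simp [S.mIdx_zero]
  | succ k ih =>
    rw [S.mIdx_succ]
    have := S.one_le_ik χ (k + 1)
    omega

theorem kOf_spec (χ : ℝ) (m : ℕ) (hm : 1 ≤ m) :
    1 ≤ S.kOf χ m ∧ S.mIdx χ (S.kOf χ m - 1) < m ∧ m ≤ S.mIdx χ (S.kOf χ m) := by
  have hne : {k | m ≤ S.mIdx χ k}.Nonempty := ⟨m, S.self_le_mIdx χ m⟩
  have hmem : m ≤ S.mIdx χ (S.kOf χ m) := Nat.sInf_mem hne
  have h0 : S.kOf χ m ≠ 0 := by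
    intro h
    rw [HPS.kOf] at h
    have := Nat.sInf_mem hne
    rw [h] at this
    simp only [Set.mem_setOf_eq, S.mIdx_zero] at this
    omega
  have hlt : S.mIdx χ (S.kOf χ m - 1) < m := by
    by_contra hc
    push_neg at hc
    have hmem' : S.kOf χ m - 1 ∈ {k | m ≤ S.mIdx χ k} := hc
    have h2 : S.kOf χ m ≤ S.kOf χ m - 1 := Nat.sInf_le hmem'
    omega
  exact ⟨by omega, hlt, hmem⟩

end HPS

/-- Packing lemma: interior-disjoint nondegenerate intervals inside `[lo,hi]` with
pairwise gaps at least `g`. -/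
theorem packing (g : ℝ) (hg : 0 ≤ g) :
    ∀ (F : Finset (ℝ × ℝ)) (lo hi : ℝ), lo ≤ hi →
    (∀ q ∈ F, lo ≤ q.1 ∧ q.1 < q.2 ∧ q.2 ≤ hi) →
    (∀ q ∈ F, ∀ q' ∈ F, q ≠ q' → q.2 ≤ q'.1 ∨ q'.2 ≤ q.1) →
    (∀ q ∈ F, ∀ q' ∈ F, q.2 ≤ q'.1 → g ≤ q'.1 - q.2) →
    ∑ q ∈ F, (q.2 - q.1) ≤ (hi - lo) - ((F.card : ℝ) - 1) * g := by
  intro F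
  induction F using Finset.strongInduction with
  | _ F ih =>
    intro lo hi hlh hin hdisj hgap
    rcases F.eq_empty_or_nonempty with rfl | hne
    · simp; linarith
    · obtain ⟨q₀, hq₀, hmin⟩ := F.exists_min_image Prod.fst hne
      have hq₀in := hin q₀ hq₀
      set F' := F.erase q₀ with hF'
      have hF'sub : F' ⊂ F := Finset.erase_ssubset hq₀
      have hstep : ∀ q ∈ F', q₀.2 + g ≤ q.1 := by
        intro q hq
        have hqF := Finset.mem_of_mem_erase hq
        have hne' : q₀ ≠ q := (Finset.ne_of_mem_erase hq).symm
        have hqin := hin q hqF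
        rcases hdisj q₀ hq₀ q hqF hne' with h | h
        · have := hgap q₀ hq₀ q hqF h
          linarith
        · have := hmin q hqF
          linarith
      rcases F'.eq_empty_or_nonempty with hF'e | hF'ne
      · have hFs : F = {q₀} := by
          have he := Finset.insert_erase hq₀
          rw [← hF', hF'e] at he
          simpa using he.symm
        rw [hFs, Finset.sum_singleton, Finset.card_singleton]
        push_cast
        linarith [hq₀in.1, hq₀in.2.2]
      · have hsum' := ih F' hF'sub (q₀.2 + g) hi
          (by
            obtain ⟨q, hq⟩ := hF'ne
            have := hstep q hq
            have := (hin q (Finset.mem_of_mem_erase hq)).2.1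
            have := (hin q (Finset.mem_of_mem_erase hq)).2.2
            linarith)
          (fun q hq => ⟨hstep q hq, (hin q (Finset.mem_of_mem_erase hq)).2.1,
            (hin q (Finset.mem_of_mem_erase hq)).2.2⟩)
          (fun q hq q' hq' h => hdisj q (Finset.mem_of_mem_erase hq) q'
            (Finset.mem_of_mem_erase hq') h)
          (fun q hq q' hq' h => hgap q (Finset.mem_of_mem_erase hq) q'
            (Finset.mem_of_mem_erase hq') h)
        have hcard : (F.card : ℝ) = (F'.card : ℝ) + 1 := by
          rw [hF', Finset.card_erase_of_mem hq₀]
          have h1 : 1 ≤ F.card := Finset.card_pos.2 hne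
          push_cast [Nat.cast_sub h1]
          ring
        have hsplit : ∑ q ∈ F, (q.2 - q.1) = (q₀.2 - q₀.1) + ∑ q ∈ F', (q.2 - q.1) := by
          rw [hF', ← Finset.sum_erase_add F _ hq₀]; ring
        rw [hsplit, hcard]
        have hlo : lo ≤ q₀.1 := hq₀in.1
        linarith

/-- The finset of valid words of length `k`. -/
def Wfin (n : ℕ → ℕ) : ℕ → Finset (List ℕ)
  | 0 => {[]}
  | k+1 => ((Wfin n k) ×ˢ Finset.Icc 1 (n (k+1))).image (fun x => x.1 ++ [x.2])

theorem mem_Wfin (n : ℕ → ℕ) (k : ℕ) (σ : List ℕ) :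
    σ ∈ Wfin n k ↔ σ.length = k ∧ ValidWord n σ := by
  induction k generalizing σ with
  | zero =>
    simp only [Wfin, Finset.mem_singleton]
    constructor
    · rintro rfl; exact ⟨rfl, validWord_nil n⟩
    · rintro ⟨h, _⟩; exact List.length_eq_zero_iff.1 h
  | succ k ih =>
    simp only [Wfin, Finset.mem_image, Finset.mem_product, Finset.mem_Icc]
    constructor
    · rintro ⟨⟨τ, j⟩, ⟨hτ, hj1, hj2⟩, rfl⟩
      obtain ⟨hlen, hval⟩ := (ih τ).1 hτ
      subst hlen
      exact ⟨by simp, (validWord_append_iff _ _ _).2 ⟨hval, hj1, hj2⟩⟩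
    · rintro ⟨hlen, hval⟩
      obtain ⟨τ, j, rfl⟩ : ∃ τ j, σ = τ ++ [j] := by
        rcases List.eq_nil_or_concat σ with rfl | ⟨τ, j, rfl⟩
        · simp at hlen
        · exact ⟨τ, j, by simp⟩
      rw [validWord_append_iff] at hval
      obtain ⟨hv, hj1, hj2⟩ := hval
      have hτlen : τ.length = k := by simp at hlen; omega
      refine ⟨(τ, j), ⟨(ih τ).2 ⟨hτlen, hv⟩, hj1, ?_⟩, rfl⟩
      rw [hτlen] at hj2; exact hj2

theorem card_Wfin (n : ℕ → ℕ) (k : ℕ) :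
    (Wfin n k).card = ∏ j ∈ Finset.Icc 1 k, n j := by
  induction k with
  | zero => simp [Wfin]
  | succ k ih =>
    have hinj : Set.InjOn (fun x : List ℕ × ℕ => x.1 ++ [x.2])
        ↑((Wfin n k) ×ˢ Finset.Icc 1 (n (k+1))) := by
      rintro ⟨τ, i⟩ h1 ⟨τ', i'⟩ h2 he
      simp only [Finset.mem_coe, Finset.mem_product] at h1 h2
      have hl : τ.length = τ'.length := by
        rw [((mem_Wfin n k τ).1 h1.1).1, ((mem_Wfin n k τ').1 h2.1).1]
      simp only at he
      obtain ⟨he1, he2⟩ := List.append_inj he hl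
      simp at he2
      exact Prod.ext he1 he2
    rw [show Wfin n (k+1) =
      ((Wfin n k) ×ˢ Finset.Icc 1 (n (k+1))).image (fun x => x.1 ++ [x.2]) from rfl]
    rw [Finset.card_image_of_injOn hinj, Finset.card_product, Nat.card_Icc, ih,
      Finset.prod_Icc_succ_top (by omega : 1 ≤ k + 1)]
    simp

namespace BranchSeq

open Classical

variable {S : HPS} {χ : ℝ} (B : BranchSeq S χ)

theorem lenSet_nonempty (m : ℕ) :
    ((fun p : ℝ × ℝ => p.2 - p.1) '' (B.Br m : Set (ℝ × ℝ))).Nonempty :=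
  (B.nonempty m).to_set.image _

theorem lenSet_finite (m : ℕ) :
    ((fun p : ℝ × ℝ => p.2 - p.1) '' (B.Br m : Set (ℝ × ℝ))).Finite :=
  ((B.Br m).finite_toSet).image _

theorem le_maxLen (m : ℕ) (p : ℝ × ℝ) (hp : p ∈ B.Br m) : p.2 - p.1 ≤ B.maxLen m :=
  le_csSup (B.lenSet_finite m).bddAbove ⟨p, hp, rfl⟩

theorem minLen_le (m : ℕ) (p : ℝ × ℝ) (hp : p ∈ B.Br m) : B.minLen m ≤ p.2 - p.1 :=
  csInf_le (B.lenSet_finite m).bddBelow ⟨p, hp, rfl⟩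

theorem maxLen_mem (m : ℕ) : ∃ p ∈ B.Br m, B.maxLen m = p.2 - p.1 := by
  have h := (B.lenSet_nonempty m).csSup_mem (B.lenSet_finite m)
  obtain ⟨p, hp, he⟩ := h
  exact ⟨p, hp, he.symm⟩

theorem minLen_mem (m : ℕ) : ∃ p ∈ B.Br m, B.minLen m = p.2 - p.1 := by
  have h := (B.lenSet_nonempty m).csInf_mem (B.lenSet_finite m)
  obtain ⟨p, hp, he⟩ := h
  exact ⟨p, hp, he.symm⟩

theorem minLen_pos (m : ℕ) : 0 < B.minLen m := by
  obtain ⟨p, hp, he⟩ := B.minLen_mem m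
  rw [he]
  linarith [B.lt m p hp]

theorem maxLen_pos (m : ℕ) : 0 < B.maxLen m := by
  obtain ⟨p, hp, _⟩ := B.minLen_mem m
  calc (0:ℝ) < B.minLen m := B.minLen_pos m
    _ ≤ p.2 - p.1 := B.minLen_le m p hp
    _ ≤ B.maxLen m := B.le_maxLen m p hp

theorem minLen_le_maxLen (m : ℕ) : B.minLen m ≤ B.maxLen m := by
  obtain ⟨p, hp, he⟩ := B.minLen_mem m
  rw [he]; exact B.le_maxLen m p hp

theorem maxLen_le (m : ℕ) : B.maxLen m ≤ 2 * χ * B.minLen m := by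
  obtain ⟨p, hp, he⟩ := B.maxLen_mem m
  obtain ⟨q, hq, he'⟩ := B.minLen_mem m
  rw [he, he']
  exact B.comparable m p hp q hq

/-- interior-disjoint nondegenerate branches are ordered -/
theorem branch_order (m : ℕ) (p q : ℝ × ℝ) (hp : p ∈ B.Br m) (hq : q ∈ B.Br m)
    (hne : p ≠ q) : p.2 ≤ q.1 ∨ q.2 ≤ p.1 := by
  by_contra hc
  push_neg at hc
  obtain ⟨h1, h2⟩ := hc
  have hp2 := B.lt m p hp
  have hq2 := B.lt m q hq
  have hd := B.disj m p hp q hq hne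
  have : (max p.1 q.1 + min p.2 q.2) / 2 ∈ Set.Ioo p.1 p.2 ∩ Set.Ioo q.1 q.2 := by
    constructor <;> constructor <;>
      simp only [lt_div_iff₀ (by norm_num : (0:ℝ) < 2), div_lt_iff₀ (by norm_num : (0:ℝ) < 2)] <;>
      rcases le_total p.1 q.1 with h | h <;> rcases le_total p.2 q.2 with h' | h' <;>
      simp [max_eq_left, max_eq_right, min_eq_left, min_eq_right, h, h'] <;> linarith
  rw [hd] at this
  exact this

theorem mem_children (m : ℕ) (p q : ℝ × ℝ) :
    q ∈ B.children m p ↔ q ∈ B.Br (m + 1) ∧ p.1 ≤ q.1 ∧ q.2 ≤ p.2 := by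
  simp [children]

theorem children_coe (m : ℕ) (p : ℝ × ℝ) :
    (B.children m p : Set (ℝ × ℝ)) =
      {q ∈ (B.Br (m + 1) : Set (ℝ × ℝ)) | Set.Icc q.1 q.2 ⊆ Set.Icc p.1 p.2} := by
  ext q
  simp only [Finset.mem_coe, B.mem_children, Set.mem_setOf_eq, Finset.mem_coe]
  constructor
  · rintro ⟨h1, h2, h3⟩
    exact ⟨h1, Set.Icc_subset_Icc h2 h3⟩
  · rintro ⟨h1, h2⟩
    rw [Set.Icc_subset_Icc_iff (le_of_lt (B.lt _ q h1))] at h2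
    exact ⟨h1, h2⟩

theorem card_children_le (m : ℕ) (p : ℝ × ℝ) (hp : p ∈ B.Br m) :
    (B.children m p).card ≤ (Mconst χ) ^ 2 := by
  have := B.card_le m p hp
  rwa [← B.children_coe, Set.ncard_coe_finset] at this

theorem card_children_exact (k : ℕ) (hk : 1 ≤ k) (m : ℕ) (h1 : S.mIdx χ (k - 1) < m)
    (h2 : m < S.mIdx χ k) (p : ℝ × ℝ) (hp : p ∈ B.Br (m - 1)) :
    (B.children (m - 1) p).card = Mconst χ := by
  have hm1 : 1 ≤ m := by
    have := Nat.zero_le (S.mIdx χ (k-1)); omega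
  have := B.exactM k hk m h1 h2 p hp
  rw [← Set.ncard_coe_finset, B.children_coe]
  rw [show m - 1 + 1 = m by omega]
  exact this

theorem br_eq_biUnion (m : ℕ) :
    B.Br (m + 1) = (B.Br m).biUnion (fun p => B.children m p) := by
  ext q
  simp only [Finset.mem_biUnion]
  constructor
  · intro hq
    obtain ⟨p, hp, hsub⟩ := B.nested m q hq
    rw [Set.Icc_subset_Icc_iff (le_of_lt (B.lt _ q hq))] at hsub
    exact ⟨p, hp, (B.mem_children m p q).2 ⟨hq, hsub⟩⟩
  · rintro ⟨p, _, hq⟩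
    exact ((B.mem_children m p q).1 hq).1

theorem children_disjoint (m : ℕ) (p p' : ℝ × ℝ) (hp : p ∈ B.Br m) (hp' : p' ∈ B.Br m)
    (hne : p ≠ p') : Disjoint (B.children m p) (B.children m p') := by
  rw [Finset.disjoint_left]
  intro q hq hq'
  obtain ⟨hq1, hq2, hq3⟩ := (B.mem_children m p q).1 hq
  obtain ⟨_, hq2', hq3'⟩ := (B.mem_children m p' q).1 hq'
  have hqlt := B.lt _ q hq1
  have hd := B.disj m p hp p' hp' hne
  have : (q.1 + q.2) / 2 ∈ Set.Ioo p.1 p.2 ∩ Set.Ioo p'.1 p'.2 := by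
    have hplt := B.lt m p hp
    have hplt' := B.lt m p' hp'
    constructor <;> constructor <;> linarith
  rw [hd] at this
  exact this

theorem sum_children_eq (m : ℕ) (f : ℝ × ℝ → ℝ) :
    ∑ q ∈ B.Br (m + 1), f q = ∑ p ∈ B.Br m, ∑ q ∈ B.children m p, f q := by
  rw [B.br_eq_biUnion m]
  exact Finset.sum_biUnion (fun p hp p' hp' hne => B.children_disjoint m p p' hp hp' hne)

theorem card_br_succ (m : ℕ) :
    (B.Br (m + 1)).card = ∑ p ∈ B.Br m, (B.children m p).card := by
  rw [B.br_eq_biUnion m]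
  exact Finset.card_biUnion (fun p hp p' hp' hne => B.children_disjoint m p p' hp hp' hne)


theorem br_levels (k : ℕ) :
    B.Br (S.mIdx χ k) = (Wfin S.n k).image (fun σ => (S.aStar σ, S.bStar σ)) := by
  rw [← Finset.coe_inj, B.levels k, Finset.coe_image]
  ext p
  simp only [Set.mem_setOf_eq, Set.mem_image, Finset.mem_coe, mem_Wfin]
  constructor
  · rintro ⟨σ, h1, h2, rfl⟩; exact ⟨σ, ⟨h1, h2⟩, rfl⟩
  · rintro ⟨σ, ⟨h1, h2⟩, rfl⟩; exact ⟨σ, h1, h2, rfl⟩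

theorem star_injOn (k : ℕ) :
    Set.InjOn (fun σ => (S.aStar σ, S.bStar σ)) ↑(Wfin S.n k) := by
  intro σ hσ τ hτ he
  simp only [Finset.mem_coe, mem_Wfin] at hσ hτ
  by_contra hne
  have h1 : S.aStar σ < S.bStar σ := S.aStar_lt_bStar σ hσ.2
  have h2 : S.aStar τ < S.bStar τ := S.aStar_lt_bStar τ hτ.2
  have e1 : S.aStar σ = S.aStar τ := congrArg Prod.fst he
  have e2 : S.bStar σ = S.bStar τ := congrArg Prod.snd he
  rcases S.ordered k σ τ hσ.1 hτ.1 hσ.2 hτ.2 hne with h | h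
  · have := S.bStar_le_b σ
    have := S.a_le_aStar τ
    linarith
  · have := S.bStar_le_b τ
    have := S.a_le_aStar σ
    linarith

theorem card_br_levels (k : ℕ) : (B.Br (S.mIdx χ k)).card = S.Nstar k := by
  rw [B.br_levels k, Finset.card_image_of_injOn (star_injOn k), card_Wfin]
  rfl

/-- every branch of `H_m`, `m ≥ m_k`, lies in some `I_ρ*`, `ρ ∈ D_k`. -/
theorem descend (k : ℕ) : ∀ m, S.mIdx χ k ≤ m → ∀ p ∈ B.Br m,
    ∃ ρ : List ℕ, ρ.length = k ∧ ValidWord S.n ρ ∧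
      S.aStar ρ ≤ p.1 ∧ p.2 ≤ S.bStar ρ := by
  intro m hm
  induction m, hm using Nat.le_induction with
  | base =>
    intro p hp
    have hset := B.levels k
    have : p ∈ (B.Br (S.mIdx χ k) : Set (ℝ × ℝ)) := hp
    rw [hset] at this
    obtain ⟨σ, h1, h2, rfl⟩ := this
    exact ⟨σ, h1, h2, le_refl _, le_refl _⟩
  | succ m hm ih =>
    intro p hp
    obtain ⟨q, hq, hsub⟩ := B.nested m p hp
    obtain ⟨ρ, h1, h2, h3, h4⟩ := ih q hq
    rw [Set.Icc_subset_Icc_iff (le_of_lt (B.lt _ p hp))] at hsub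
    exact ⟨ρ, h1, h2, le_trans h3 hsub.1, le_trans hsub.2 h4⟩

/-- every branch of `H_m` for `m_{k-1} < m ≤ m_k` has trimmed-interval endpoints. -/
theorem branch_endpoints (k : ℕ) (hk : 1 ≤ k) (m : ℕ) (h1 : S.mIdx χ (k - 1) < m)
    (h2 : m ≤ S.mIdx χ k) (q : ℝ × ℝ) (hq : q ∈ B.Br m) :
    ∃ σ τ : List ℕ, σ.length = k ∧ τ.length = k ∧ ValidWord S.n σ ∧ ValidWord S.n τ ∧
      q.1 = S.aStar σ ∧ q.2 = S.bStar τ := by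
  rcases Nat.eq_or_lt_of_le h2 with he | hlt
  · have hset := B.levels k
    have : q ∈ (B.Br (S.mIdx χ k) : Set (ℝ × ℝ)) := by rw [← he]; exact hq
    rw [hset] at this
    obtain ⟨σ, hl, hv, rfl⟩ := this
    exact ⟨σ, σ, hl, hl, hv, hv, rfl, rfl⟩
  · exact B.hull k hk m h1 hlt q hq

/-- key inequality: gaps between children of a branch are at least `α̲*_k`. -/
theorem child_gap (m : ℕ) (hm : 1 ≤ m) (p : ℝ × ℝ) (hp : p ∈ B.Br (m - 1))
    (q q' : ℝ × ℝ) (hq : q ∈ B.Br m) (hq' : q' ∈ B.Br m)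
    (hq1 : p.1 ≤ q.1) (hq2 : q.2 ≤ p.2) (hq1' : p.1 ≤ q'.1) (hq2' : q'.2 ≤ p.2)
    (hord : q.2 ≤ q'.1) :
    S.alphaLo (S.kOf χ m) + q.2 ≤ q'.1 := by
  obtain ⟨hk1, hklt, hkle⟩ := S.kOf_spec χ m hm
  set k := S.kOf χ m with hkdef
  obtain ⟨ρ, hρlen, hρval, hρ1, hρ2⟩ := B.descend (k - 1) (m - 1) (by omega) p hp
  have hqlt : q.1 < q.2 := B.lt m q hq
  have hq'lt : q'.1 < q'.2 := B.lt m q' hq'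
  obtain ⟨σ₁, τ₁, hσl, hτl, hσv, hτv, he1, he2⟩ :=
    B.branch_endpoints k hk1 m hklt hkle q hq
  obtain ⟨σ₂, τ₂, hσl', hτl', hσv', hτv', he1', he2'⟩ :=
    B.branch_endpoints k hk1 m hklt hkle q' hq'
  -- same parent ρ
  have hpar1 : τ₁.dropLast = ρ := by
    refine S.sameParent_right ρ τ₁ (by omega) hρval hτv ?_ ?_
    · rw [← he2]; linarith
    · rw [← he2]; linarith
  have hpar2 : σ₂.dropLast = ρ := by
    refine S.sameParent_left ρ σ₂ (by omega) hρval hσv' ?_ ?_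
    · rw [← he1']; linarith
    · rw [← he1']; linarith
  have := S.key_gap σ₂ τ₁ hσv' hτv (by omega) (by omega) (by rw [hpar1, hpar2])
    (by rw [← he2, ← he1']; exact hord)
  rw [hτl] at this
  rw [he2, he1']
  exact this


theorem card_mid (k : ℕ) (hk : 1 ≤ k) : ∀ d, S.mIdx χ (k - 1) + d < S.mIdx χ k →
    (B.Br (S.mIdx χ (k - 1) + d)).card = S.Nstar (k - 1) * (Mconst χ) ^ d := by
  intro d
  induction d with
  | zero => intro _; simpa using B.card_br_levels (k - 1)
  | succ d ih =>
    intro hd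
    set m := S.mIdx χ (k - 1) + (d + 1) with hmdef
    have hm1 : S.mIdx χ (k - 1) < m := by omega
    have hm2 : m < S.mIdx χ k := hd
    have hcc : ∀ p ∈ B.Br (m - 1), (B.children (m - 1) p).card = Mconst χ :=
      fun p hp => B.card_children_exact k hk m hm1 hm2 p hp
    have hm1' : m - 1 = S.mIdx χ (k - 1) + d := by omega
    have hsucc : (B.Br (m - 1 + 1)).card = ∑ p ∈ B.Br (m - 1), (B.children (m - 1) p).card :=
      B.card_br_succ (m - 1)
    rw [show m - 1 + 1 = m by omega] at hsucc
    rw [hsucc, Finset.sum_congr rfl hcc,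
      Finset.sum_const, smul_eq_mul, hm1', ih (by omega)]
    ring

theorem card_double (hχ : 1 ≤ χ) (m : ℕ) (hm : 1 ≤ m) :
    2 * (B.Br (m - 1)).card ≤ (B.Br m).card := by
  obtain ⟨hk1, hklt, hkle⟩ := S.kOf_spec χ m hm
  set k := S.kOf χ m with hkdef
  have hM2 : 2 ≤ Mconst χ := by
    have : (2:ℝ) ≤ 2 * χ := by linarith
    have h2 : 1 ≤ ⌊2 * χ⌋₊ := by
      rw [Nat.one_le_floor_iff]; linarith
    simp only [Mconst]; omega
  rcases Nat.eq_or_lt_of_le hkle with he | hlt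
  · -- m = mIdx k
    have hik : S.mIdx χ k = S.mIdx χ (k - 1) + S.ik χ k := by
      have := S.mIdx_succ χ (k - 1)
      rw [show k - 1 + 1 = k by omega] at this
      exact this
    have hik1 : 1 ≤ S.ik χ k := S.one_le_ik χ k
    have hm1' : m - 1 = S.mIdx χ (k - 1) + (S.ik χ k - 1) := by omega
    have hcard1 : (B.Br (m - 1)).card = S.Nstar (k - 1) * (Mconst χ) ^ (S.ik χ k - 1) := by
      rw [hm1']
      exact B.card_mid k hk1 (S.ik χ k - 1) (by omega)
    have hcard2 : (B.Br m).card = S.Nstar k := by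
      rw [he]; exact B.card_br_levels k
    have hNk : S.Nstar k = S.Nstar (k - 1) * S.n k := by
      simp only [HPS.Nstar]
      rw [show k = (k - 1) + 1 by omega, Finset.prod_Icc_succ_top (by omega : 1 ≤ k - 1 + 1)]
      rw [show k - 1 + 1 = k by omega]
    have hnk : 2 * (Mconst χ) ^ (S.ik χ k - 1) ≤ S.n k := by
      have hn2 : 2 ≤ S.n k := S.hn k hk1
      rcases Nat.lt_or_ge (Nat.log (Mconst χ) (S.n k)) 2 with hlog | hlog
      · have : S.ik χ k = 1 := by
          simp only [HPS.ik]; omega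
        rw [this]
        simpa using hn2
      · have hik2 : S.ik χ k = Nat.log (Mconst χ) (S.n k) := by
          simp only [HPS.ik]; omega
        have hpow : (Mconst χ) ^ (Nat.log (Mconst χ) (S.n k)) ≤ S.n k :=
          Nat.pow_log_le_self (Mconst χ) (by omega)
        calc 2 * (Mconst χ) ^ (S.ik χ k - 1) ≤ (Mconst χ) * (Mconst χ) ^ (S.ik χ k - 1) := by
              exact Nat.mul_le_mul_right _ hM2
          _ = (Mconst χ) ^ (S.ik χ k) := by
              rw [← pow_succ']
              congr 1
              omega
          _ ≤ S.n k := by rw [hik2]; exact hpow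
    rw [hcard1, hcard2, hNk]
    calc 2 * (S.Nstar (k-1) * (Mconst χ) ^ (S.ik χ k - 1))
        = S.Nstar (k-1) * (2 * (Mconst χ) ^ (S.ik χ k - 1)) := by ring
      _ ≤ S.Nstar (k-1) * S.n k := Nat.mul_le_mul_left _ hnk
  · -- m < mIdx k : exactM
    have hcc : ∀ p ∈ B.Br (m - 1), (B.children (m - 1) p).card = Mconst χ :=
      fun p hp => B.card_children_exact k hk1 m hklt hlt p hp
    have hsucc : (B.Br (m - 1 + 1)).card = ∑ p ∈ B.Br (m - 1), (B.children (m - 1) p).card :=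
      B.card_br_succ (m - 1)
    rw [show m - 1 + 1 = m by omega] at hsucc
    rw [hsucc, Finset.sum_congr rfl hcc, Finset.sum_const, smul_eq_mul]
    have := Nat.mul_le_mul_left ((B.Br (m-1)).card) hM2
    omega


theorem len_pos (m : ℕ) : 0 < B.len m := by
  have := B.nonempty m
  exact Finset.sum_pos (fun p hp => by linarith [B.lt m p hp]) this

theorem len_split (m : ℕ) (hm : 1 ≤ m) :
    B.len m = ∑ p ∈ B.Br (m - 1), ∑ q ∈ B.children (m - 1) p, (q.2 - q.1) := by
  have := B.sum_children_eq (m - 1) (fun q => q.2 - q.1)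
  rw [show m - 1 + 1 = m by omega] at this
  exact this

theorem len_le_card_mul (m : ℕ) :
    B.len m ≤ ((B.Br m).card : ℝ) * B.maxLen m := by
  calc B.len m = ∑ p ∈ B.Br m, (p.2 - p.1) := rfl
    _ ≤ ∑ p ∈ B.Br m, B.maxLen m := Finset.sum_le_sum (fun p hp => B.le_maxLen m p hp)
    _ = ((B.Br m).card : ℝ) * B.maxLen m := by rw [Finset.sum_const, nsmul_eq_mul]

theorem lamSet_finite (m : ℕ) :
    {r : ℝ | ∃ p ∈ B.Br (m - 1), ∃ q ∈ B.Br m,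
      Set.Icc q.1 q.2 ⊆ Set.Icc p.1 p.2 ∧ r = (q.2 - q.1) / (p.2 - p.1)}.Finite := by
  apply Set.Finite.subset (Set.Finite.image
    (fun x : (ℝ × ℝ) × (ℝ × ℝ) => (x.2.2 - x.2.1) / (x.1.2 - x.1.1))
    (((B.Br (m-1)).finite_toSet.prod (B.Br m).finite_toSet)))
  rintro r ⟨p, hp, q, hq, _, rfl⟩
  exact ⟨(p, q), ⟨hp, hq⟩, rfl⟩

theorem lamSet_nonempty (m : ℕ) (hm : 1 ≤ m) :
    {r : ℝ | ∃ p ∈ B.Br (m - 1), ∃ q ∈ B.Br m,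
      Set.Icc q.1 q.2 ⊆ Set.Icc p.1 p.2 ∧ r = (q.2 - q.1) / (p.2 - p.1)}.Nonempty := by
  obtain ⟨q, hq⟩ := B.nonempty m
  have hq' : q ∈ B.Br (m - 1 + 1) := by rw [show m - 1 + 1 = m by omega]; exact hq
  obtain ⟨p, hp, hsub⟩ := B.nested (m - 1) q hq'
  exact ⟨_, p, hp, q, hq, hsub, rfl⟩

theorem ratio_le_Lam (m : ℕ) (p q : ℝ × ℝ) (hp : p ∈ B.Br (m - 1)) (hq : q ∈ B.Br m)
    (hsub : Set.Icc q.1 q.2 ⊆ Set.Icc p.1 p.2) :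
    (q.2 - q.1) / (p.2 - p.1) ≤ B.Lam m :=
  le_csSup (B.lamSet_finite m).bddAbove ⟨p, hp, q, hq, hsub, rfl⟩

theorem Lam_pos (m : ℕ) (hm : 1 ≤ m) : 0 < B.Lam m := by
  obtain ⟨r, p, hp, q, hq, hsub, rfl⟩ := B.lamSet_nonempty m hm
  have h1 := B.lt (m - 1) p hp
  have h2 := B.lt m q hq
  have : 0 < (q.2 - q.1) / (p.2 - p.1) := div_pos (by linarith) (by linarith)
  linarith [B.ratio_le_Lam m p q hp hq hsub]

theorem child_le_Lam (m : ℕ) (hm : 1 ≤ m) (p q : ℝ × ℝ) (hp : p ∈ B.Br (m - 1))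
    (hq : q ∈ B.children (m - 1) p) :
    q.2 - q.1 ≤ B.Lam m * (p.2 - p.1) := by
  obtain ⟨hq1, hq2, hq3⟩ := (B.mem_children (m - 1) p q).1 hq
  have hq1' : q ∈ B.Br m := by rwa [show m - 1 + 1 = m by omega] at hq1
  have hsub : Set.Icc q.1 q.2 ⊆ Set.Icc p.1 p.2 := Set.Icc_subset_Icc hq2 hq3
  have hr := B.ratio_le_Lam m p q hp hq1' hsub
  have hpos := B.lt (m - 1) p hp
  rw [div_le_iff₀ (by linarith)] at hr
  linarith

/-- step inequality for `Λ`. -/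
theorem step_Lam (m : ℕ) (hm : 1 ≤ m) :
    B.len m ≤ ((Mconst χ : ℝ) ^ 2 * B.Lam m) * B.len (m - 1) := by
  rw [B.len_split m hm]
  have key : ∀ p ∈ B.Br (m - 1), ∑ q ∈ B.children (m - 1) p, (q.2 - q.1) ≤
      ((Mconst χ : ℝ) ^ 2 * B.Lam m) * (p.2 - p.1) := by
    intro p hp
    have hpos := B.lt (m - 1) p hp
    calc ∑ q ∈ B.children (m - 1) p, (q.2 - q.1)
        ≤ ∑ _q ∈ B.children (m - 1) p, B.Lam m * (p.2 - p.1) :=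
          Finset.sum_le_sum (fun q hq => B.child_le_Lam m hm p q hp hq)
      _ = ((B.children (m - 1) p).card : ℝ) * (B.Lam m * (p.2 - p.1)) := by
          rw [Finset.sum_const, nsmul_eq_mul]
      _ ≤ ((Mconst χ : ℝ) ^ 2) * (B.Lam m * (p.2 - p.1)) := by
          apply mul_le_mul_of_nonneg_right
          · exact_mod_cast Nat.cast_le.2 (B.card_children_le (m - 1) p hp)
          · have hL := B.Lam_pos m hm
            exact mul_nonneg (le_of_lt hL) (by linarith)
      _ = ((Mconst χ : ℝ) ^ 2 * B.Lam m) * (p.2 - p.1) := by ring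
  calc ∑ p ∈ B.Br (m - 1), ∑ q ∈ B.children (m - 1) p, (q.2 - q.1)
      ≤ ∑ p ∈ B.Br (m - 1), ((Mconst χ : ℝ) ^ 2 * B.Lam m) * (p.2 - p.1) :=
        Finset.sum_le_sum key
    _ = ((Mconst χ : ℝ) ^ 2 * B.Lam m) * B.len (m - 1) := by
        rw [← Finset.mul_sum]; rfl

/-- step inequality for `γ`. -/
theorem step_gam (hχ : 1 ≤ χ) (m : ℕ) (hm : 1 ≤ m) :
    B.len m ≤ (1 - B.gam m) * B.len (m - 1) := by
  obtain ⟨hk1, hklt, hkle⟩ := S.kOf_spec χ m hm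
  set k := S.kOf χ m with hkdef
  have hα : 0 ≤ S.alphaLo k := S.alphaLo_nonneg k hk1
  -- per branch packing
  have key : ∀ p ∈ B.Br (m - 1), ∑ q ∈ B.children (m - 1) p, (q.2 - q.1) ≤
      (p.2 - p.1) - (((B.children (m - 1) p).card : ℝ) - 1) * S.alphaLo k := by
    intro p hp
    have hpos := B.lt (m - 1) p hp
    have hmem : ∀ q ∈ B.children (m - 1) p, q ∈ B.Br m ∧ p.1 ≤ q.1 ∧ q.2 ≤ p.2 := by
      intro q hq
      obtain ⟨h1, h2, h3⟩ := (B.mem_children (m - 1) p q).1 hq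
      exact ⟨by rwa [show m - 1 + 1 = m by omega] at h1, h2, h3⟩
    refine packing (S.alphaLo k) hα (B.children (m - 1) p) p.1 p.2 (le_of_lt hpos)
      (fun q hq => ⟨(hmem q hq).2.1, B.lt m q (hmem q hq).1, (hmem q hq).2.2⟩)
      (fun q hq q' hq' hne => B.branch_order m q q' (hmem q hq).1 (hmem q' hq').1 hne)
      (fun q hq q' hq' hord => ?_)
    have := B.child_gap m hm p hp q q' (hmem q hq).1 (hmem q' hq').1
      (hmem q hq).2.1 (hmem q hq).2.2 (hmem q' hq').2.1 (hmem q' hq').2.2 hord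
    rw [← hkdef] at this
    linarith
  have hsum : B.len m ≤ B.len (m - 1) -
      (((B.Br m).card : ℝ) - ((B.Br (m - 1)).card : ℝ)) * S.alphaLo k := by
    rw [B.len_split m hm]
    have hcard : ((B.Br m).card : ℝ) =
        ∑ p ∈ B.Br (m - 1), ((B.children (m - 1) p).card : ℝ) := by
      have := B.card_br_succ (m - 1)
      rw [show m - 1 + 1 = m by omega] at this
      exact_mod_cast this
    calc ∑ p ∈ B.Br (m - 1), ∑ q ∈ B.children (m - 1) p, (q.2 - q.1)
        ≤ ∑ p ∈ B.Br (m - 1),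
            ((p.2 - p.1) - (((B.children (m - 1) p).card : ℝ) - 1) * S.alphaLo k) :=
          Finset.sum_le_sum key
      _ = B.len (m - 1) - (((B.Br m).card : ℝ) - ((B.Br (m - 1)).card : ℝ)) * S.alphaLo k := by
          have e1 := Finset.sum_sub_distrib (s := B.Br (m-1)) (f := fun p : ℝ × ℝ => p.2 - p.1)
            (g := fun p => (((B.children (m-1) p).card : ℝ) - 1) * S.alphaLo k)
          rw [e1, ← Finset.sum_mul]
          have e2 := Finset.sum_sub_distrib (s := B.Br (m-1))
            (f := fun p : ℝ × ℝ => (((B.children (m-1) p).card : ℝ))) (g := fun _ => (1:ℝ))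
          rw [e2, Finset.sum_const, nsmul_eq_mul, mul_one, ← hcard]
          rfl
  have hdouble : 2 * ((B.Br (m - 1)).card : ℝ) ≤ ((B.Br m).card : ℝ) := by
    exact_mod_cast B.card_double hχ m hm
  have hml : B.len (m - 1) ≤ ((B.Br (m - 1)).card : ℝ) * B.maxLen (m - 1) :=
    B.len_le_card_mul (m - 1)
  have hmaxpos := B.maxLen_pos (m - 1)
  have hgam : B.gam m * B.len (m - 1) ≤
      (((B.Br m).card : ℝ) - ((B.Br (m - 1)).card : ℝ)) * S.alphaLo k := by
    have h1 : B.gam m * B.len (m - 1) = S.alphaLo k * (B.len (m - 1) / B.maxLen (m - 1)) := by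
      simp only [gam, ← hkdef]
      field_simp
    rw [h1]
    have h2 : B.len (m - 1) / B.maxLen (m - 1) ≤ ((B.Br (m - 1)).card : ℝ) := by
      rw [div_le_iff₀ hmaxpos]
      exact hml
    calc S.alphaLo k * (B.len (m - 1) / B.maxLen (m - 1))
        ≤ S.alphaLo k * ((B.Br (m - 1)).card : ℝ) := by
          apply mul_le_mul_of_nonneg_left h2 hα
      _ ≤ (((B.Br m).card : ℝ) - ((B.Br (m - 1)).card : ℝ)) * S.alphaLo k := by
          have : ((B.Br (m - 1)).card : ℝ) ≤ ((B.Br m).card : ℝ) - ((B.Br (m - 1)).card : ℝ) := by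
            linarith
          nlinarith
  nlinarith [hsum, hgam]

end BranchSeq
end Aux

/-- **(5.2) and neighbours.** For the sequence `{H_m}` of Lemma 4.1 (initial interval
`I₀*` normalized to `[0,1]`): `λ(m) ≤ Λ(m) ≤ 4χ²·λ(m)`, `γ(m) ≤ Γ(m) ≤ 2χ²·γ(m)`,
`l(H_m) ≤ ∏_{i=1}^m M²·Λ(i)` and `l(H_m) ≤ ∏_{i=1}^m (1 - γ(i))`. -/
theorem ratio_comparisons_and_length_bounds
    (S : HPS) (χ : ℝ) (hχ : 1 ≤ χ) (hgap : GapComparable S χ)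
    (B : BranchSeq S χ)
    (hnorm : S.aStar ([] : List ℕ) = 0 ∧ S.bStar ([] : List ℕ) = 1) :
    ∀ m, 1 ≤ m →
      (B.lamSmall m ≤ B.Lam m ∧ B.Lam m ≤ 4 * χ ^ 2 * B.lamSmall m) ∧
      (B.gam m ≤ B.Gam m ∧ B.Gam m ≤ 2 * χ ^ 2 * B.gam m) ∧
      B.len m ≤ ∏ i ∈ Finset.Icc 1 m, ((Mconst χ : ℝ) ^ 2 * B.Lam i) ∧
      B.len m ≤ ∏ i ∈ Finset.Icc 1 m, (1 - B.gam i) := by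
  have hχ0 : 0 < χ := by linarith
  -- `H₀ = [0,1]`
  have hbr0 : B.Br 0 = {((0:ℝ), (1:ℝ))} := by
    rw [← Finset.coe_inj]
    have h0 : S.mIdx χ 0 = 0 := S.mIdx_zero χ
    have := B.levels 0
    rw [h0] at this
    rw [this]
    ext p
    simp only [Set.mem_setOf_eq, Finset.coe_singleton, Set.mem_singleton_iff]
    constructor
    · rintro ⟨σ, hl, _, rfl⟩
      rw [List.length_eq_zero_iff] at hl
      subst hl
      rw [hnorm.1, hnorm.2]
    · rintro rfl
      exact ⟨[], rfl, validWord_nil S.n, by rw [hnorm.1, hnorm.2]⟩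
  have hlen0 : B.len 0 = 1 := by
    simp [BranchSeq.len, hbr0]
  -- the product bounds, by induction
  have prodLam : ∀ m, B.len m ≤ ∏ i ∈ Finset.Icc 1 m, ((Mconst χ : ℝ) ^ 2 * B.Lam i) := by
    intro m
    induction m with
    | zero => simp [hlen0]
    | succ m ih =>
      rw [Finset.prod_Icc_succ_top (by omega : 1 ≤ m + 1)]
      have hstep := B.step_Lam (m + 1) (by omega)
      rw [show m + 1 - 1 = m by omega] at hstep
      have hc : 0 ≤ (Mconst χ : ℝ) ^ 2 * B.Lam (m + 1) := by
        have := B.Lam_pos (m + 1) (by omega)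
        positivity
      calc B.len (m + 1) ≤ ((Mconst χ : ℝ) ^ 2 * B.Lam (m + 1)) * B.len m := hstep
        _ ≤ ((Mconst χ : ℝ) ^ 2 * B.Lam (m + 1)) *
              ∏ i ∈ Finset.Icc 1 m, ((Mconst χ : ℝ) ^ 2 * B.Lam i) :=
            mul_le_mul_of_nonneg_left ih hc
        _ = (∏ i ∈ Finset.Icc 1 m, ((Mconst χ : ℝ) ^ 2 * B.Lam i)) *
              ((Mconst χ : ℝ) ^ 2 * B.Lam (m + 1)) := by ring
  have prodGam : ∀ m, B.len m ≤ ∏ i ∈ Finset.Icc 1 m, (1 - B.gam i) := by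
    intro m
    induction m with
    | zero => simp [hlen0]
    | succ m ih =>
      rw [Finset.prod_Icc_succ_top (by omega : 1 ≤ m + 1)]
      have hstep := B.step_gam hχ (m + 1) (by omega)
      rw [show m + 1 - 1 = m by omega] at hstep
      have hc : 0 ≤ 1 - B.gam (m + 1) := by
        nlinarith [B.len_pos (m + 1), B.len_pos m]
      calc B.len (m + 1) ≤ (1 - B.gam (m + 1)) * B.len m := hstep
        _ ≤ (1 - B.gam (m + 1)) * ∏ i ∈ Finset.Icc 1 m, (1 - B.gam i) :=
            mul_le_mul_of_nonneg_left ih hc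
        _ = (∏ i ∈ Finset.Icc 1 m, (1 - B.gam i)) * (1 - B.gam (m + 1)) := by ring
  intro m hm
  obtain ⟨hk1, _, _⟩ := S.kOf_spec χ m hm
  set k := S.kOf χ m with hkdef
  have hαLo : 0 ≤ S.alphaLo k := S.alphaLo_nonneg k hk1
  have hαHi : S.alphaLo k ≤ S.alphaHi k := S.alphaLo_le_alphaHi k hk1
  have hαχ : S.alphaHi k ≤ χ * S.alphaLo k := S.alphaHi_le_chi k hk1 χ hχ hgap
  have hminpos := B.minLen_pos (m - 1)
  have hmaxpos := B.maxLen_pos (m - 1)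
  have hminmax := B.minLen_le_maxLen (m - 1)
  have hmaxmin := B.maxLen_le (m - 1)
  refine ⟨⟨?_, ?_⟩, ⟨?_, ?_⟩, prodLam m, prodGam m⟩
  · -- λ ≤ Λ
    exact csInf_le_csSup (B.lamSet_nonempty m hm) (B.lamSet_finite m).bddBelow
      (B.lamSet_finite m).bddAbove
  · -- Λ ≤ 4χ²λ
    have h4 : (0:ℝ) < 4 * χ ^ 2 := by positivity
    apply csSup_le (B.lamSet_nonempty m hm)
    rintro r ⟨p, hp, q, hq, hsub, rfl⟩
    rw [show (q.2 - q.1) / (p.2 - p.1) ≤ 4 * χ ^ 2 * B.lamSmall m ↔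
        (q.2 - q.1) / (p.2 - p.1) / (4 * χ ^ 2) ≤ B.lamSmall m from by
      rw [div_le_iff₀ h4]; constructor <;> intro h <;> nlinarith]
    apply le_csInf (B.lamSet_nonempty m hm)
    rintro r' ⟨p', hp', q', hq', hsub', rfl⟩
    have h1 := B.lt (m - 1) p hp
    have h2 := B.lt m q hq
    have h3 := B.lt (m - 1) p' hp'
    have h4' := B.lt m q' hq'
    have hqq : q.2 - q.1 ≤ 2 * χ * (q'.2 - q'.1) := B.comparable m q hq q' hq'
    have hpp : p'.2 - p'.1 ≤ 2 * χ * (p.2 - p.1) := B.comparable (m - 1) p' hp' p hp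
    rw [div_div, div_le_div_iff₀ (by nlinarith : (0:ℝ) < (p.2 - p.1) * (4 * χ ^ 2))
      (by linarith : (0:ℝ) < p'.2 - p'.1)]
    nlinarith
  · -- γ ≤ Γ
    simp only [BranchSeq.gam, BranchSeq.Gam, ← hkdef]
    exact div_le_div₀ (by linarith) hαHi hminpos hminmax
  · -- Γ ≤ 2χ²γ
    simp only [BranchSeq.gam, BranchSeq.Gam, ← hkdef]
    rw [show 2 * χ ^ 2 * (S.alphaLo k / B.maxLen (m - 1)) =
        (2 * χ ^ 2 * S.alphaLo k) / B.maxLen (m - 1) from (mul_div_assoc _ _ _).symm,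
      div_le_div_iff₀ hminpos hmaxpos]
    nlinarith [mul_le_mul_of_nonneg_right hαχ (le_of_lt hmaxpos),
      mul_le_mul_of_nonneg_left hmaxmin (mul_nonneg (le_of_lt hχ0) hαLo)]
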